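/- Let b ∈ R with |b| < 2, c = sqrt(2-b), d = sqrt(2+b), and x(u,v) = (b/(cd), (cos cu)/c, (sin cu)/c, (cos dv)/d, (sin dv)/d). Then H = (1/2)(x_uu + x_vv) + x = (b/(cd), ((2-c^2)/2)(cos cu)/c, ((2-c^2)/2)(sin cu)/c, ((2-d^2)/2)(cos dv)/d, ((2-d^2)/2)(sin dv)/d) = (b/(cd), (b/2)(cos cu)/c, (b/2)(sin cu)/c, (-b/2)(cos dv)/d, (-b/2)(sin dv)/d), and ⟨H,H⟩ = -b^2/(c^2 d^2) + (b^2/4)(1/c^2 + 1/d^2) = -b^2/(4-b^2) + (b^2/4)·(4/(4-b^2)) = 0. Hence if b ≠ 0 the mean curvature vector H is light-like at every point, so the surface is quasi-minimal in S^4_1(1). -/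
import Mathlib


open Real

/-- The indefinite inner product of the Minkowski space `E⁵₁`. -/
noncomputable def mink (x y : Fin 5 → ℝ) : ℝ :=
  -(x 0 * y 0) + x 1 * y 1 + x 2 * y 2 + x 3 * y 3 + x 4 * y 4

/-- The surface (iii): `x(u,v) = (b/(cd), (cos cu)/c, (sin cu)/c, (cos dv)/d, (sin dv)/d)`,
where `c = √(2-b)`, `d = √(2+b)`. -/
noncomputable def surf (b u v : ℝ) : Fin 5 → ℝ :=
  let c := Real.sqrt (2 - b)
  let d := Real.sqrt (2 + b)
  ![b / (c * d), Real.cos (c * u) / c, Real.sin (c * u) / c,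
    Real.cos (d * v) / d, Real.sin (d * v) / d]

/-- Second partial derivative of the surface with respect to `u`. -/
noncomputable def surfUU (b u v : ℝ) : Fin 5 → ℝ :=
  fun i => deriv (fun t => deriv (fun s => surf b s v i) t) u

/-- Second partial derivative of the surface with respect to `v`. -/
noncomputable def surfVV (b u v : ℝ) : Fin 5 → ℝ :=
  fun i => deriv (fun t => deriv (fun s => surf b u s i) t) v

/-- The mean curvature vector of the surface in `S⁴₁(1)`: `H = (1/2)(x_uu + x_vv) + x`. -/
noncomputable def meanCurv (b u v : ℝ) : Fin 5 → ℝ :=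
  fun i => (1 / 2) * (surfUU b u v i + surfVV b u v i) + surf b u v i

lemma d2cos (a u : ℝ) :
    deriv (deriv fun x => Real.cos (a * x)) u = -(a ^ 2 * Real.cos (a * u)) := by
  have h : (deriv fun x : ℝ => Real.cos (a * x)) = fun x => -Real.sin (a * x) * a := by
    funext t
    have h1 : HasDerivAt (fun x : ℝ => a * x) a t := by
      simpa using (hasDerivAt_id t).const_mul a
    exact ((Real.hasDerivAt_cos (a * t)).comp t h1).deriv
  rw [h]
  have h1 : HasDerivAt (fun x : ℝ => a * x) a u := by
    simpa using (hasDerivAt_id u).const_mul a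
  have h2 : HasDerivAt (fun x => -Real.sin (a * x) * a) (-(Real.cos (a * u) * a) * a) u :=
    (((Real.hasDerivAt_sin (a * u)).comp u h1).neg).mul_const a
  rw [h2.deriv]; ring

lemma d2sin (a u : ℝ) :
    deriv (deriv fun x => Real.sin (a * x)) u = -(a ^ 2 * Real.sin (a * u)) := by
  have h : (deriv fun x : ℝ => Real.sin (a * x)) = fun x => Real.cos (a * x) * a := by
    funext t
    have h1 : HasDerivAt (fun x : ℝ => a * x) a t := by
      simpa using (hasDerivAt_id t).const_mul a
    exact ((Real.hasDerivAt_sin (a * t)).comp t h1).deriv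
  rw [h]
  have h1 : HasDerivAt (fun x : ℝ => a * x) a u := by
    simpa using (hasDerivAt_id u).const_mul a
  have h2 : HasDerivAt (fun x => Real.cos (a * x) * a) (-Real.sin (a * u) * a * a) u :=
    ((Real.hasDerivAt_cos (a * u)).comp u h1).mul_const a
  rw [h2.deriv]; ring

/-- For `|b| < 2`, `c = √(2-b)`, `d = √(2+b)`, the mean curvature vector
`H = (1/2)(x_uu + x_vv) + x` of the surface
`x(u,v) = (b/(cd), (cos cu)/c, (sin cu)/c, (cos dv)/d, (sin dv)/d)` equals
`(b/(cd), ((2-c²)/2)(cos cu)/c, ((2-c²)/2)(sin cu)/c, ((2-d²)/2)(cos dv)/d, ((2-d²)/2)(sin dv)/d)`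
`= (b/(cd), (b/2)(cos cu)/c, (b/2)(sin cu)/c, (-b/2)(cos dv)/d, (-b/2)(sin dv)/d)`,
and `⟨H,H⟩ = 0`. Hence if `b ≠ 0`, `H` is light-like at every point, so the surface is
quasi-minimal in `S⁴₁(1)`. -/
theorem surface_iii_quasiMinimal (b : ℝ) (hb : |b| < 2) :
    ∀ u v : ℝ,
      (let c := Real.sqrt (2 - b)
       let d := Real.sqrt (2 + b)
       meanCurv b u v =
        ![b / (c * d), ((2 - c ^ 2) / 2) * (Real.cos (c * u) / c),
          ((2 - c ^ 2) / 2) * (Real.sin (c * u) / c),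
          ((2 - d ^ 2) / 2) * (Real.cos (d * v) / d),
          ((2 - d ^ 2) / 2) * (Real.sin (d * v) / d)] ∧
       meanCurv b u v =
        ![b / (c * d), (b / 2) * (Real.cos (c * u) / c), (b / 2) * (Real.sin (c * u) / c),
          (-b / 2) * (Real.cos (d * v) / d), (-b / 2) * (Real.sin (d * v) / d)]) ∧
      mink (meanCurv b u v) (meanCurv b u v) = 0 ∧
      (b ≠ 0 → meanCurv b u v ≠ 0) := by
  intro u v
  obtain ⟨hb1, hb2⟩ := abs_lt.mp hb
  have h2mb : (0:ℝ) < 2 - b := by linarith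
  have h2pb : (0:ℝ) < 2 + b := by linarith
  set c := Real.sqrt (2 - b) with hc_def
  set d := Real.sqrt (2 + b) with hd_def
  have hc : 0 < c := Real.sqrt_pos.mpr h2mb
  have hd : 0 < d := Real.sqrt_pos.mpr h2pb
  have hc2 : c ^ 2 = 2 - b := Real.sq_sqrt h2mb.le
  have hd2 : d ^ 2 = 2 + b := Real.sq_sqrt h2pb.le
  have hH : meanCurv b u v =
      ![b / (c * d), (b / 2) * (Real.cos (c * u) / c), (b / 2) * (Real.sin (c * u) / c),
        (-b / 2) * (Real.cos (d * v) / d), (-b / 2) * (Real.sin (d * v) / d)] := by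
    funext i
    fin_cases i
    · simp [meanCurv, surfUU, surfVV, surf, ← hc_def, ← hd_def]
    · simp [meanCurv, surfUU, surfVV, surf, ← hc_def, ← hd_def, d2cos, d2sin]
      linear_combination (-(Real.cos (c * u) / (2 * c))) * hc2
    · simp [meanCurv, surfUU, surfVV, surf, ← hc_def, ← hd_def, d2cos, d2sin]
      linear_combination (-(Real.sin (c * u) / (2 * c))) * hc2
    · simp [meanCurv, surfUU, surfVV, surf, ← hc_def, ← hd_def, d2cos, d2sin]
      linear_combination (-(Real.cos (d * v) / (2 * d))) * hd2
    · simp [meanCurv, surfUU, surfVV, surf, ← hc_def, ← hd_def, d2cos, d2sin]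
      linear_combination (-(Real.sin (d * v) / (2 * d))) * hd2
  refine ⟨⟨?_, hH⟩, ?_, ?_⟩
  · rw [hH]
    have e1 : ((2:ℝ) - c ^ 2) / 2 = b / 2 := by rw [hc2]; ring
    have e2 : ((2:ℝ) - d ^ 2) / 2 = -b / 2 := by rw [hd2]; ring
    rw [e1, e2]
  · rw [hH]
    have s1 := Real.sin_sq_add_cos_sq (c * u)
    have s2 := Real.sin_sq_add_cos_sq (d * v)
    have E : -((b/(c*d))^2) + (b/(2*c))^2 + (b/(2*d))^2 = 0 := by
      rw [div_pow, div_pow, div_pow, mul_pow, mul_pow, mul_pow, hc2, hd2]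
      field_simp
      ring
    simp only [mink, Matrix.cons_val_zero, Matrix.cons_val_one, Matrix.head_cons,
      Matrix.cons_val_two, Matrix.tail_cons, Matrix.cons_val_three, Matrix.cons_val_four]
    linear_combination (b^2/(4*c^2)) * s1 + (b^2/(4*d^2)) * s2 + E
  · intro hbne h
    have h0 := congrFun h 0
    rw [hH] at h0
    simp only [Matrix.cons_val_zero, Pi.zero_apply] at h0
    exact (div_ne_zero hbne (mul_ne_zero hc.ne' hd.ne')) h0
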